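/- arXiv:2206.11515 — 6 statements merged into one kernel-verified Lean document; each statement's English description precedes it below -/
import Mathlib

section
/- Let At be a finite set of atoms, Γ a set of propositional formulas over At, F a propositional formula over At, and X an interpretation. Then X is a stable model of Γ ∪ {¬F} if and only if X is a stable model of Γ and X does not satisfy F. (Integrity constraints do not affect the generation of stable models; they can only eliminate stable models generated by the rest of the program.) -/
open Filter

attribute [local instance] Classical.propDecidable

/-- Propositional formulas over atoms `At`, built from atoms and `⊥`
    using `∧`, `∨`, `→`. -/
inductive Formula (At : Type) where
  | bot  : Formula At
  | atom : At → Formula At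
  | and  : Formula At → Formula At → Formula At
  | or   : Formula At → Formula At → Formula At
  | imp  : Formula At → Formula At → Formula At

namespace Formula

variable {At : Type}

/-- `¬F` abbreviates `F → ⊥`. -/
def neg (F : Formula At) : Formula At := imp F bot

/-- Classical satisfaction of a formula by an interpretation `X ⊆ At`. -/
def sat (X : Finset At) : Formula At → Prop
  | bot => False
  | atom a => a ∈ X
  | and F G => sat X F ∧ sat X G
  | or F G => sat X F ∨ sat X G
  | imp F G => sat X F → sat X G

/-- The reduct `F^X`: every maximal subformula not satisfied by `X` is
    replaced by `⊥`. -/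
noncomputable def reduct (X : Finset At) : Formula At → Formula At
  | bot => bot
  | atom a => if sat X (atom a) then atom a else bot
  | and F G => if sat X (and F G) then and (reduct X F) (reduct X G) else bot
  | or F G => if sat X (or F G) then or (reduct X F) (reduct X G) else bot
  | imp F G => if sat X (imp F G) then imp (reduct X F) (reduct X G) else bot

end Formula

variable {At : Type}

/-- `X` satisfies every formula in `Γ`. -/
def SatAll (X : Finset At) (Γ : Set (Formula At)) : Prop := ∀ F ∈ Γ, F.sat X

/-- `X` is a stable model of `Γ` (Ferraris semantics): `X` satisfies `Γ` and no
    proper subset of `X` satisfies the reduct `Γ^X`. -/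
def IsStable (X : Finset At) (Γ : Set (Formula At)) : Prop :=
  SatAll X Γ ∧ ∀ Y : Finset At, Y ⊂ X → ¬ SatAll Y (Formula.reduct X '' Γ)

/-- Weak constraint `:~ F [w, l]`. -/
structure WeakConstraint (At : Type) where
  formula : Formula At
  weight : ℝ
  level : ℕ

/-- `Cost_Ω(X, l)`: sum of the weights `w` over all `:~ F [w, l]` in `Ω` at level `l`
    whose formula is satisfied by `X`. -/
noncomputable def Cost (Ω : Finset (WeakConstraint At)) (X : Finset At) (l : ℕ) : ℝ :=
  ∑ c ∈ Ω.filter (fun c => c.level = l ∧ c.formula.sat X), c.weight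

/-- `X` is an optimal stable model of `Γ ∪ Ω`. -/
def OptStable (Γ : Set (Formula At)) (Ω : Finset (WeakConstraint At)) (X : Finset At) : Prop :=
  IsStable X Γ ∧
    ¬ ∃ Y : Finset At, IsStable Y Γ ∧ ∃ l : ℕ,
        Cost Ω Y l < Cost Ω X l ∧ ∀ l' : ℕ, l < l' → Cost Ω Y l' = Cost Ω X l'

/-- A weight is either the symbolic infinite weight `α` or a real number. -/
inductive Weight where
  | alpha : Weight
  | soft : ℝ → Weight

/-- The real value of a weight when the real number `a` is substituted for `α`. -/
def Weight.val (a : ℝ) : Weight → ℝ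
  | .alpha => a
  | .soft w => w

/-- A weighted formula `w : F`. -/
structure WFormula (At : Type) where
  weight : Weight
  formula : Formula At

/-- A hard formula `α : F`. -/
def WFormula.isHard (p : WFormula At) : Prop := p.weight = Weight.alpha

/-- A soft formula `w : F` with `w` a real number. -/
def WFormula.isSoft (p : WFormula At) : Prop := ∃ w : ℝ, p.weight = Weight.soft w

/-- `hard(Π)`. -/
noncomputable def hardPart (P : Finset (WFormula At)) : Finset (WFormula At) :=
  P.filter (fun p => p.isHard)

/-- `soft(Π)`. -/
noncomputable def softPart (P : Finset (WFormula At)) : Finset (WFormula At) :=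
  P.filter (fun p => p.isSoft)

/-- `Π_X`: the weighted formulas of `Π` whose formula is satisfied by `X`. -/
noncomputable def satPart (P : Finset (WFormula At)) (X : Finset At) : Finset (WFormula At) :=
  P.filter (fun p => p.formula.sat X)

/-- `SSM(Π)`: the soft stable models of the LP^MLN program `Π`. -/
def SSM (P : Finset (WFormula At)) : Set (Finset At) :=
  { X | IsStable X (WFormula.formula '' (↑(satPart P X) : Set (WFormula At))) }

/-- `W_Π(X, a)`. -/
noncomputable def Wgt (P : Finset (WFormula At)) (X : Finset At) (a : ℝ) : ℝ :=
  if X ∈ SSM P then Real.exp (∑ p ∈ satPart P X, p.weight.val a) else 0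

/-- The quotient whose limit as `a → ∞` defines `P_Π(X)`. -/
noncomputable def ratio [Fintype At] (P : Finset (WFormula At)) (X : Finset At) (a : ℝ) : ℝ :=
  Wgt P X a / ∑ Y ∈ Finset.univ.filter (fun Y => Y ∈ SSM P), Wgt P Y a

/-- `SSM'(Π)`: soft stable models satisfying all hard formulas. -/
def SSM' (P : Finset (WFormula At)) : Set (Finset At) :=
  { X | X ∈ SSM P ∧ ∀ p ∈ P, p.isHard → p.formula.sat X }

/-- `W'_Π(X)` (alternative semantics). -/
noncomputable def Wgt' (P : Finset (WFormula At)) (X : Finset At) : ℝ :=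
  if X ∈ SSM' P then
    Real.exp (∑ p ∈ (softPart P).filter (fun p => p.formula.sat X), p.weight.val 0)
  else 0

/-- `P'_Π(X)` (alternative semantics). -/
noncomputable def Pr' [Fintype At] (P : Finset (WFormula At)) (X : Finset At) : ℝ :=
  Wgt' P X / ∑ Y : Finset At, Wgt' P Y

/-- A plingo program: hard formulas, soft integrity constraints (a real weight
    together with the constraint formula), and weak constraints. -/
structure PlingoProgram (At : Type) where
  hard : Finset (Formula At)
  soft : Finset (ℝ × Formula At)
  weak : Finset (WeakConstraint At)

/-- `OSM(Π)`: optimal stable models of `hard(Π) ∪ weak(Π)`. -/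
def OSM (P : PlingoProgram At) : Set (Finset At) :=
  { X | OptStable (↑P.hard) P.weak X }

/-- `W''_Π(X)`. -/
noncomputable def Wgt'' (P : PlingoProgram At) (X : Finset At) : ℝ :=
  if X ∈ OSM P then Real.exp (∑ p ∈ P.soft.filter (fun p => p.2.sat X), p.1) else 0

/-- `P''_Π(X)`. -/
noncomputable def Pr'' [Fintype At] (P : PlingoProgram At) (X : Finset At) : ℝ :=
  Wgt'' P X / ∑ Y ∈ Finset.univ.filter (fun Y => Y ∈ OSM P), Wgt'' P Y

/-! If `X ⊭ F`, the reduct of `¬F = F → ⊥` relative to `X` is `⊥ → ⊥`, which every interpretation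
satisfies, so adding `¬F` to `Γ` changes neither the satisfaction nor the minimality condition on
`X`. If `X ⊨ F`, then `X` violates `¬F` and is no stable model of `Γ ∪ {¬F}`. -/

namespace Formula

theorem reduct_of_not_sat {X : Finset At} {F : Formula At} (hF : ¬ F.sat X) :
    F.reduct X = bot := by
  cases F <;> simp only [reduct, hF, if_false]

theorem sat_reduct_neg_of_not_sat {X : Finset At} {F : Formula At} (hF : ¬ F.sat X)
    (Y : Finset At) : (F.neg.reduct X).sat Y := by
  simp only [neg, reduct, sat, hF, imp_self, ↓reduceIte, reduct_of_not_sat hF]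

end Formula

theorem satAll_union {X : Finset At} {Γ Δ : Set (Formula At)} :
    SatAll X (Γ ∪ Δ) ↔ SatAll X Γ ∧ SatAll X Δ :=
  forall₂_or_left

theorem satAll_singleton {X : Finset At} {F : Formula At} : SatAll X {F} ↔ F.sat X :=
  forall_eq

theorem isStable_union_iff_of_satAll_reduct {X : Finset At} {Γ Δ : Set (Formula At)}
    (hX : SatAll X Δ) (hΔ : ∀ Y ⊂ X, SatAll Y (Formula.reduct X '' Δ)) :
    IsStable X (Γ ∪ Δ) ↔ IsStable X Γ := by
  simp only [IsStable, satAll_union, Set.image_union, hX, and_true]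
  refine and_congr_right fun _ => forall₂_congr fun Y hY => ?_
  simp only [hΔ Y hY, and_true]

theorem stable_model_integrity_constraint_general {At : Type}
    (Γ : Set (Formula At)) (F : Formula At) (X : Finset At) :
    IsStable X (Γ ∪ {F.neg}) ↔ IsStable X Γ ∧ ¬ F.sat X := by
  by_cases hF : F.sat X
  · simp only [hF, not_true_eq_false, and_false, iff_false]
    exact fun h => h.1 F.neg (Or.inr rfl) hF
  · have hreduct : ∀ Y ⊂ X, SatAll Y (Formula.reduct X '' {F.neg}) := fun Y _ => by
      simpa only [Set.image_singleton, satAll_singleton] using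
        Formula.sat_reduct_neg_of_not_sat hF Y
    rw [isStable_union_iff_of_satAll_reduct (satAll_singleton.2 (show F.neg.sat X from hF)) hreduct]
    simp only [hF, not_false_eq_true, and_true]

/-- `X` is a stable model of `Γ ∪ {¬F}` iff `X` is a stable model of `Γ`
    and `X` does not satisfy `F`. -/
theorem stable_model_integrity_constraint {At : Type} [Fintype At]
    (Γ : Set (Formula At)) (F : Formula At) (X : Finset At) :
    IsStable X (Γ ∪ {F.neg}) ↔ IsStable X Γ ∧ ¬ F.sat X :=
  stable_model_integrity_constraint_general Γ F X
end

section
/- Let Γ be a finite set of propositional formulas over a finite set of atoms and Ω a finite set of weak constraints, and let Ω' = {:~ ¬F [−w, l] : (:~ F [w, l]) ∈ Ω}. Then the optimal stable models of Γ ∪ Ω coincide with the optimal stable models of Γ ∪ Ω'. (Replacing every weak constraint by its negated version with opposite weight at the same level shifts the cost of every stable model at each level by the same constant, hence preserves optimality.) -/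
open Filter

attribute [local instance] Classical.propDecidable

variable {At : Type}

namespace WeakConstraint

def negate (c : WeakConstraint At) : WeakConstraint At :=
  ⟨c.formula.neg, -c.weight, c.level⟩

theorem negate_injective : Function.Injective (negate : WeakConstraint At → WeakConstraint At) := by
  rintro ⟨F, w, l⟩ ⟨G, v, k⟩ h
  simp_all [negate, Formula.neg]

end WeakConstraint

/-- At each level, the constraints violated by `X` in `Ω` are exactly those whose negations
`X` satisfies, so the two costs at that level add up to the total weight of the level. -/
theorem cost_image_negate (Ω : Finset (WeakConstraint At)) (X : Finset At) (l : ℕ) :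
    Cost (Ω.image WeakConstraint.negate) X l
      = Cost Ω X l - ∑ c ∈ Ω with c.level = l, c.weight := by
  rw [← Finset.sum_filter_add_sum_filter_not _ (fun c => c.formula.sat X)]
  simp only [Cost, Finset.filter_image, Finset.filter_filter,
    Finset.sum_image fun _ _ _ _ h => WeakConstraint.negate_injective h]
  simp [WeakConstraint.negate, Formula.neg, Formula.sat, Finset.sum_neg_distrib]

theorem optStable_iff_of_cost_eq_add (Γ : Set (Formula At)) {Ω Ω' : Finset (WeakConstraint At)}
    (k : ℕ → ℝ) (hcost : ∀ Y l, Cost Ω' Y l = Cost Ω Y l + k l) (X : Finset At) :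
    OptStable Γ Ω X ↔ OptStable Γ Ω' X := by
  simp only [OptStable, hcost, add_lt_add_iff_right, add_left_inj]

theorem opt_stable_negated_weak_constraints_general {At : Type}
    (Γ : Finset (Formula At)) (Ω : Finset (WeakConstraint At)) (X : Finset At) :
    OptStable ↑Γ Ω X ↔
      OptStable ↑Γ
        (Ω.image (fun c => ⟨c.formula.neg, -c.weight, c.level⟩ : WeakConstraint At → _)) X :=
  optStable_iff_of_cost_eq_add _ (fun l => -∑ c ∈ Ω with c.level = l, c.weight)
    (fun Y l => by rw [← sub_eq_add_neg]; exact cost_image_negate Ω Y l) X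

/-- replacing every weak constraint `:~ F [w, l]` by `:~ ¬F [−w, l]`
    preserves the optimal stable models. -/
theorem opt_stable_negated_weak_constraints {At : Type} [Fintype At]
    (Γ : Finset (Formula At)) (Ω : Finset (WeakConstraint At)) (X : Finset At) :
    OptStable ↑Γ Ω X ↔
      OptStable ↑Γ
        (Ω.image (fun c => ⟨c.formula.neg, -c.weight, c.level⟩ : WeakConstraint At → _)) X :=
  opt_stable_negated_weak_constraints_general Γ Ω X
end

section
/- Let Π be an LP^MLN program over a finite set of atoms with SSM'(Π) ≠ ∅, and let τ₃(Π) be the plingo program with hard formulas {α : F : (α : F) ∈ hard(Π)} ∪ {α : F ∨ ¬F : (w : F) ∈ soft(Π)}, soft integrity constraints {w : ¬¬F : (w : F) ∈ soft(Π)}, and weak constraints {:~ F [−1, 1] : (α : F) ∈ hard(Π)}. Then for every interpretation X, P'_Π(X) = P''_{τ₃(Π)}(X), i.e., τ₃ represents the alternative LP^MLN semantics as a plingo program. -/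
open Filter

attribute [local instance] Classical.propDecidable

variable {At : Type}

/-- The translation `τ₃`: hard formulas `{α : F : (α : F) ∈ hard(Π)} ∪
    {α : F ∨ ¬F : (w : F) ∈ soft(Π)}`, soft integrity constraints
    `{w : ¬¬F : (w : F) ∈ soft(Π)}`, and weak constraints
    `{:~ F [−1, 1] : (α : F) ∈ hard(Π)}`. -/
noncomputable def tau3 {At : Type} (P : Finset (WFormula At)) : PlingoProgram At where
  hard := (hardPart P).image (fun p => p.formula) ∪
          (softPart P).image (fun p => (p.formula).or p.formula.neg)
  soft := (softPart P).image (fun p => (p.weight.val 0, p.formula.neg.neg))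
  weak := (hardPart P).image (fun p => ⟨p.formula, -1, 1⟩)

/-!
Relative to `X`, the reduct of the choice formula `F ∨ ¬F` is `F^X ∨ ⊥` when `X ⊨ F` and the
tautology `⊥ ∨ (⊥ → ⊥)` otherwise. Hence the hard part of `τ₃(Π)` has the same reduct-models as
`Π_X` as soon as `X` satisfies `hard(Π)`, and its stable models are exactly `SSM'(Π)`. They all
satisfy every hard formula, so each weak constraint `:~ F [−1, 1]` costs them the same and all of
them are optimal. Finally `¬¬F` holds exactly where `F` does, so the soft weights agree as well.
-/

namespace Formula

variable {At : Type}

@[simp]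
theorem sat_neg {X : Finset At} {F : Formula At} : F.neg.sat X ↔ ¬ F.sat X := Iff.rfl

theorem sat_neg_neg {X : Finset At} {F : Formula At} : F.neg.neg.sat X ↔ F.sat X := by
  simp

theorem sat_or_neg (X : Finset At) (F : Formula At) : (F.or F.neg).sat X :=
  em (F.sat X)

theorem reduct_eq_bot_of_not_sat {X : Finset At} {F : Formula At} (h : ¬ F.sat X) :
    F.reduct X = bot := by
  cases F <;> simp [reduct, h]

theorem sat_reduct_or_neg_iff (X Z : Finset At) (F : Formula At) :
    ((F.or F.neg).reduct X).sat Z ↔ (F.sat X → (F.reduct X).sat Z) := by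
  by_cases hF : F.sat X
  · have hneg : ¬ F.neg.sat X := fun h => h hF
    simp [reduct, reduct_eq_bot_of_not_sat hneg, hF, sat]
  · simp [reduct, neg, reduct_eq_bot_of_not_sat hF, hF, sat]

end Formula

variable {At : Type}

theorem WFormula.isHard_or_isSoft (p : WFormula At) : p.isHard ∨ p.isSoft := by
  cases hw : p.weight with
  | alpha => exact Or.inl hw
  | soft w => exact Or.inr ⟨w, hw⟩

theorem satAll_image_iff {X : Finset At} {f : Formula At → Formula At} {Γ : Set (Formula At)} :
    SatAll X (f '' Γ) ↔ ∀ F ∈ Γ, (f F).sat X :=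
  Set.forall_mem_image

theorem optStable_iff_isStable {Γ : Set (Formula At)} {Ω : Finset (WeakConstraint At)}
    (hcost : ∀ {Y Z}, SatAll Y Γ → SatAll Z Γ → ∀ l, Cost Ω Y l = Cost Ω Z l) (X : Finset At) :
    OptStable Γ Ω X ↔ IsStable X Γ := by
  refine ⟨And.left, fun hX => ⟨hX, ?_⟩⟩
  rintro ⟨Y, hY, l, hlt, -⟩
  exact (hcost hY.1 hX.1 l ▸ hlt).false

section Tau3

variable (P : Finset (WFormula At))

theorem satAll_image_tau3_hard_iff (f : Formula At → Formula At) (Z : Finset At) :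
    SatAll Z (f '' ↑(tau3 P).hard) ↔
      (∀ p ∈ P, p.isHard → (f p.formula).sat Z) ∧
        ∀ p ∈ P, p.isSoft → (f (p.formula.or p.formula.neg)).sat Z := by
  simp only [satAll_image_iff, tau3, hardPart, softPart, Finset.coe_union, Finset.coe_image,
    Set.mem_union, or_imp, forall_and, Set.forall_mem_image, Finset.coe_filter, Set.mem_ofPred_eq,
    and_imp]

theorem satAll_tau3_hard_iff (Y : Finset At) :
    SatAll Y ↑(tau3 P).hard ↔ ∀ p ∈ P, p.isHard → p.formula.sat Y := by
  simpa [Formula.sat_or_neg] using satAll_image_tau3_hard_iff P id Y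

theorem satAll_reduct_satPart_iff (Y Z : Finset At) :
    SatAll Z (Formula.reduct Y '' (WFormula.formula '' ↑(satPart P Y))) ↔
      ∀ p ∈ P, p.formula.sat Y → (p.formula.reduct Y).sat Z := by
  simp only [satAll_image_iff, satPart, Set.forall_mem_image, Finset.coe_filter, Set.mem_ofPred_eq,
    and_imp]

theorem satAll_reduct_tau3_hard_iff {Y : Finset At} (hY : ∀ p ∈ P, p.isHard → p.formula.sat Y)
    (Z : Finset At) :
    SatAll Z (Formula.reduct Y '' ↑(tau3 P).hard) ↔
      SatAll Z (Formula.reduct Y '' (WFormula.formula '' ↑(satPart P Y))) := by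
  rw [satAll_image_tau3_hard_iff, satAll_reduct_satPart_iff]
  simp only [Formula.sat_reduct_or_neg_iff]
  constructor
  · rintro ⟨hhard, hsoft⟩ p hp
    rcases p.isHard_or_isSoft with h | h
    exacts [fun _ => hhard p hp h, hsoft p hp h]
  · intro h
    exact ⟨fun p hp hH => h p hp (hY p hp hH), fun p hp _ => h p hp⟩

theorem isStable_tau3_hard_iff (Y : Finset At) :
    IsStable Y ↑(tau3 P).hard ↔ Y ∈ SSM' P := by
  have hsat : SatAll Y (WFormula.formula '' ↑(satPart P Y)) := by
    rintro _ ⟨p, hp, rfl⟩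
    exact (Finset.mem_filter.mp hp).2
  rw [IsStable, satAll_tau3_hard_iff]
  constructor
  · rintro ⟨hY, hmin⟩
    exact ⟨⟨hsat, fun Z hZ => (satAll_reduct_tau3_hard_iff P hY Z).not.mp (hmin Z hZ)⟩, hY⟩
  · rintro ⟨⟨-, hmin⟩, hY⟩
    exact ⟨hY, fun Z hZ => (satAll_reduct_tau3_hard_iff P hY Z).not.mpr (hmin Z hZ)⟩

theorem cost_tau3_weak_eq {Y Z : Finset At} (hY : SatAll Y ↑(tau3 P).hard)
    (hZ : SatAll Z ↑(tau3 P).hard) (l : ℕ) :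
    Cost (tau3 P).weak Y l = Cost (tau3 P).weak Z l := by
  rw [satAll_tau3_hard_iff] at hY hZ
  unfold Cost
  congr 1
  refine Finset.filter_congr fun c hc => ?_
  obtain ⟨p, hp, rfl⟩ := Finset.mem_image.mp hc
  obtain ⟨hpP, hH⟩ := Finset.mem_filter.mp hp
  simp [hY p hpP hH, hZ p hpP hH]

theorem osm_tau3 : OSM (tau3 P) = SSM' P := by
  ext Y
  exact (optStable_iff_isStable (cost_tau3_weak_eq P) Y).trans (isStable_tau3_hard_iff P Y)

theorem injOn_tau3_soft :
    Set.InjOn (fun p : WFormula At => (p.weight.val 0, p.formula.neg.neg)) ↑(softPart P) := by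
  rintro ⟨_, F⟩ hp ⟨_, G⟩ hq hpq
  obtain ⟨-, w, rfl⟩ := Finset.mem_filter.mp hp
  obtain ⟨-, v, rfl⟩ := Finset.mem_filter.mp hq
  simp_all [Weight.val, Formula.neg]

theorem sum_tau3_soft_eq (Y : Finset At) :
    ∑ q ∈ (tau3 P).soft.filter (fun q => q.2.sat Y), q.1 =
      ∑ p ∈ (softPart P).filter (fun p => p.formula.sat Y), p.weight.val 0 := by
  rw [tau3, Finset.filter_image, Finset.sum_image]
  · simp only [Formula.sat_neg_neg]
  · exact (injOn_tau3_soft P).mono (Finset.filter_subset _ _)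

theorem wgt''_tau3 (Y : Finset At) : Wgt'' (tau3 P) Y = Wgt' P Y := by
  rw [Wgt'', Wgt', osm_tau3, sum_tau3_soft_eq]

end Tau3

theorem sum_filter_osm_wgt'' [Fintype At] (Q : PlingoProgram At) :
    ∑ Y ∈ Finset.univ.filter (fun Y => Y ∈ OSM Q), Wgt'' Q Y = ∑ Y, Wgt'' Q Y :=
  Finset.sum_filter_of_ne fun _ _ hY => by_contra fun hQ => hY (if_neg hQ)

theorem lpmln_alt_prob_eq_tau3_prob_general {At : Type} [Fintype At] (P : Finset (WFormula At))
    (X : Finset At) :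
    Pr' P X = Pr'' (tau3 P) X := by
  rw [Pr', Pr'', sum_filter_osm_wgt'']
  simp only [wgt''_tau3]

/-- if `SSM'(Π) ≠ ∅` then `P'_Π(X) = P''_{τ₃(Π)}(X)` for every `X`. -/
theorem lpmln_alt_prob_eq_tau3_prob {At : Type} [Fintype At] (P : Finset (WFormula At))
    (h : (SSM' P).Nonempty) (X : Finset At) :
    Pr' P X = Pr'' (tau3 P) X :=
  lpmln_alt_prob_eq_tau3_prob_general P X
end

section
/- Let Π be an LP^MLN program over a finite set of atoms such that SSM'(Π) ≠ ∅. Then for every interpretation X, the limit defining P_Π(X) exists and P_Π(X) = P'_Π(X); that is, the standard and the alternative LP^MLN semantics assign the same probability to every interpretation whenever some soft stable model satisfies all hard formulas. -/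
open Filter

attribute [local instance] Classical.propDecidable

variable {At : Type}

/- Write `K` for the number of hard formulas. A soft stable model `Y` satisfying `k` of them has
weight `exp (k a + s_Y)`, where `s_Y` is the weight of the soft formulas it satisfies. After
rescaling numerator and denominator of `P_Π` by `exp (-K a)`, the weight of `Y` becomes the
constant `exp s_Y = W'_Π(Y)` when `k = K`, i.e. `Y ∈ SSM'(Π)`, and decays to `0 = W'_Π(Y)` when
`k < K`. The denominator converges to `∑ W'_Π`, which is positive because `SSM'(Π) ≠ ∅`. -/

lemma tendsto_div_sum_of_tendsto_mul {α ι : Type*} {l : Filter α} (s : Finset ι)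
    {f : ι → α → ℝ} {g : ι → ℝ} {c : α → ℝ} (hc : ∀ a, c a ≠ 0)
    (hf : ∀ i, Tendsto (fun a => f i a * c a) l (nhds (g i))) (hg : ∑ i ∈ s, g i ≠ 0) (x : ι) :
    Tendsto (fun a => f x a / ∑ i ∈ s, f i a) l (nhds (g x / ∑ i ∈ s, g i)) := by
  have hsum : Tendsto (fun a => (∑ i ∈ s, f i a) * c a) l (nhds (∑ i ∈ s, g i)) := by
    simpa only [Finset.sum_mul] using tendsto_finsetSum s fun i _ => hf i
  exact ((hf x).div hsum hg).congr fun a => mul_div_mul_right _ _ (hc a)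

lemma Weight.val_eq_ite_add_val_zero (a : ℝ) :
    ∀ w : Weight, w.val a = (if w = .alpha then a else 0) + w.val 0
  | .alpha => by simp [Weight.val]
  | .soft _ => by simp [Weight.val]

section Program

variable {At : Type} (P : Finset (WFormula At)) {Y : Finset At}

lemma sum_weight_val_eq (s : Finset (WFormula At)) (a : ℝ) :
    ∑ p ∈ s, p.weight.val a = (s.filter WFormula.isHard).card * a + ∑ p ∈ s, p.weight.val 0 := by
  rw [Finset.sum_congr rfl fun p _ => Weight.val_eq_ite_add_val_zero a p.weight,
    Finset.sum_add_distrib, ← Finset.sum_filter, Finset.sum_const, nsmul_eq_mul]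
  rfl

lemma filter_isHard_satPart_eq_hardPart (hY : ∀ p ∈ P, p.isHard → p.formula.sat Y) :
    (satPart P Y).filter WFormula.isHard = hardPart P := by
  ext p
  simp only [satPart, hardPart, Finset.mem_filter]
  exact ⟨fun ⟨⟨hp, _⟩, hh⟩ => ⟨hp, hh⟩, fun ⟨hp, hh⟩ => ⟨⟨hp, hY p hp hh⟩, hh⟩⟩

lemma filter_isHard_satPart_ssubset_hardPart (hY : ¬ ∀ p ∈ P, p.isHard → p.formula.sat Y) :
    (satPart P Y).filter WFormula.isHard ⊂ hardPart P := by
  push Not at hY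
  obtain ⟨p, hp, hh, hns⟩ := hY
  refine Finset.ssubset_iff_of_subset (fun q hq => ?_) |>.mpr ⟨p, ?_, ?_⟩
  · simp only [satPart, hardPart, Finset.mem_filter] at hq ⊢
    exact ⟨hq.1.1, hq.2⟩
  · simpa [hardPart] using ⟨hp, hh⟩
  · simp [satPart, hns]

lemma Wgt'_of_mem_SSM' (hY : Y ∈ SSM' P) :
    Wgt' P Y = Real.exp (∑ p ∈ satPart P Y, p.weight.val 0) := by
  rw [Wgt', if_pos hY, softPart, satPart, Finset.filter_comm, Finset.sum_filter_of_ne]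
  rintro ⟨_ | w, F⟩ - hval
  · simp [Weight.val] at hval
  · exact ⟨w, rfl⟩

lemma Wgt'_of_notMem_SSM (hY : Y ∉ SSM P) : Wgt' P Y = 0 :=
  if_neg fun h => hY h.1

lemma Wgt_mul_exp_neg_card_hardPart (hY : Y ∈ SSM P) (a : ℝ) :
    Wgt P Y a * Real.exp (-(hardPart P).card * a) =
      Real.exp (∑ p ∈ satPart P Y, p.weight.val 0) *
        Real.exp ((((satPart P Y).filter WFormula.isHard).card - (hardPart P).card) * a) := by
  rw [Wgt, if_pos hY, sum_weight_val_eq, ← Real.exp_add, ← Real.exp_add]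
  ring_nf

lemma tendsto_Wgt_mul_exp_neg_card_hardPart (Y : Finset At) :
    Tendsto (fun a => Wgt P Y a * Real.exp (-(hardPart P).card * a)) atTop (nhds (Wgt' P Y)) := by
  by_cases hSSM : Y ∈ SSM P
  swap
  · simp only [Wgt, if_neg hSSM, zero_mul, Wgt'_of_notMem_SSM P hSSM, tendsto_const_nhds]
  simp only [Wgt_mul_exp_neg_card_hardPart P hSSM]
  by_cases hhard : ∀ p ∈ P, p.isHard → p.formula.sat Y
  · simp [filter_isHard_satPart_eq_hardPart P hhard, Wgt'_of_mem_SSM' P ⟨hSSM, hhard⟩]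
  have hlt : (((satPart P Y).filter WFormula.isHard).card : ℝ) < (hardPart P).card := by
    exact_mod_cast Finset.card_lt_card (filter_isHard_satPart_ssubset_hardPart P hhard)
  have hdecay := Real.tendsto_exp_atBot.comp (tendsto_id.const_mul_atTop_of_neg (sub_neg.mpr hlt))
  rw [Wgt', if_neg fun h => hhard h.2]
  simpa using hdecay.const_mul (Real.exp (∑ p ∈ satPart P Y, p.weight.val 0))

lemma sum_Wgt'_pos [Fintype At] (h : (SSM' P).Nonempty) : 0 < ∑ Y : Finset At, Wgt' P Y := by
  obtain ⟨Y₀, hY₀⟩ := h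
  refine Finset.sum_pos' (fun _ _ => ?_) ⟨Y₀, Finset.mem_univ _, ?_⟩
  · unfold Wgt'; split <;> positivity
  · rw [Wgt'_of_mem_SSM' P hY₀]; positivity

lemma sum_filter_SSM_Wgt' [Fintype At] :
    ∑ Y ∈ Finset.univ.filter (fun Y => Y ∈ SSM P), Wgt' P Y = ∑ Y : Finset At, Wgt' P Y :=
  Finset.sum_filter_of_ne fun _ _ hne => by_contra fun hY => hne (Wgt'_of_notMem_SSM P hY)

end Program

/-- if `SSM'(Π) ≠ ∅`, then for every interpretation `X` the limit
    defining `P_Π(X)` exists and equals `P'_Π(X)`. -/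
theorem lpmln_standard_eq_alternative {At : Type} [Fintype At] (P : Finset (WFormula At))
    (h : (SSM' P).Nonempty) (X : Finset At) :
    Tendsto (fun a : ℝ => ratio P X a) atTop (nhds (Pr' P X)) := by
  have hsum : ∑ Y ∈ Finset.univ.filter (fun Y => Y ∈ SSM P), Wgt' P Y ≠ 0 := by
    rw [sum_filter_SSM_Wgt']
    exact (sum_Wgt'_pos P h).ne'
  have := tendsto_div_sum_of_tendsto_mul _ (fun a => Real.exp_ne_zero _)
    (tendsto_Wgt_mul_exp_neg_card_hardPart P) hsum X
  rwa [sum_filter_SSM_Wgt'] at this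
end

section
/- Let Π be an LP^MLN program over a finite set At of atoms with SSM(Π) ≠ ∅. Then for every interpretation X the limit defining P_Π(X) exists, 0 ≤ P_Π(X) ≤ 1, and Σ_{X ∈ SSM(Π)} P_Π(X) = 1. -/
open Filter

attribute [local instance] Classical.propDecidable

variable {At : Type}

/-!
Substituting `a` for `α`, the weight of a soft stable model `X` is `exp (c_X * a + d_X)`, where
`c_X` counts the hard formulas satisfied by `X`. Dividing numerator and denominator of the ratio
by `exp (M * a)`, with `M` the largest `c_Y`, every term converges, to `exp d_Y` if `c_Y = M` and
to `0` otherwise, and the limit of the denominator is positive. Since each ratio lies in `[0, 1]`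
and the ratios of the soft stable models sum to `1` for every `a`, the same holds for the limits.
-/

open Finset Real

lemma tendsto_exp_mul_add_of_nonpos {c : ℝ} (hc : c ≤ 0) (d : ℝ) :
    Tendsto (fun a : ℝ => exp (c * a + d)) atTop (nhds (if c = 0 then exp d else 0)) := by
  rcases hc.lt_or_eq with hc | rfl
  · rw [if_neg hc.ne]
    exact tendsto_exp_atBot.comp
      (tendsto_atBot_add_const_right _ d (tendsto_id.const_mul_atTop_of_neg hc))
  · simp

lemma exists_tendsto_exp_div_sum_exp {ι : Type*} {S : Finset ι} {i : ι} (hi : i ∈ S)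
    (c d : ι → ℝ) :
    ∃ l, Tendsto (fun a : ℝ => exp (c i * a + d i) / ∑ j ∈ S, exp (c j * a + d j))
      atTop (nhds l) := by
  set M := S.sup' ⟨i, hi⟩ c
  set e : ι → ℝ := fun j => if c j - M = 0 then exp (d j) else 0
  have he_nonneg (j : ι) : 0 ≤ e j := by
    dsimp only [e]; split_ifs <;> positivity
  have htendsto {j : ι} (hj : j ∈ S) :
      Tendsto (fun a : ℝ => exp ((c j - M) * a + d j)) atTop (nhds (e j)) :=
    tendsto_exp_mul_add_of_nonpos (sub_nonpos.2 (S.le_sup' c hj)) (d j)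
  have hsum_pos : 0 < ∑ j ∈ S, e j := by
    obtain ⟨k, hk, hkM⟩ := S.exists_mem_eq_sup' ⟨i, hi⟩ c
    have hek : e k = exp (d k) := if_pos (sub_eq_zero.2 hkM.symm)
    exact sum_pos' (fun j _ => he_nonneg j) ⟨k, hk, hek ▸ exp_pos _⟩
  refine ⟨e i / ∑ j ∈ S, e j, ((htendsto hi).div (tendsto_finsetSum S fun j hj => htendsto hj)
    hsum_pos.ne').congr fun a => ?_⟩
  have hshift (j : ι) : exp ((c j - M) * a + d j) = exp (c j * a + d j) * exp (-(M * a)) := by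
    rw [← exp_add]; ring_nf
  simp only [Pi.div_apply, hshift, ← sum_mul, mul_div_mul_right _ _ (exp_ne_zero _)]

lemma sum_weight_val (s : Finset (WFormula At)) (a : ℝ) :
    ∑ p ∈ s, p.weight.val a = #(s.filter WFormula.isHard) * a + ∑ p ∈ s, p.weight.val 0 := by
  have hval : ∀ p ∈ s, p.weight.val a = (if p.isHard then a else 0) + p.weight.val 0 := by
    rintro ⟨_ | _, _⟩ _ <;> simp [Weight.val, WFormula.isHard]
  rw [sum_congr rfl hval, sum_add_distrib, ← sum_filter, sum_const, nsmul_eq_mul]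

lemma Wgt_of_mem_SSM {P : Finset (WFormula At)} {X : Finset At} (hX : X ∈ SSM P) (a : ℝ) :
    Wgt P X a = exp (#((satPart P X).filter WFormula.isHard) * a +
      ∑ p ∈ satPart P X, p.weight.val 0) := by
  rw [Wgt, if_pos hX, sum_weight_val]

lemma Wgt_of_notMem_SSM {P : Finset (WFormula At)} {X : Finset At} (hX : X ∉ SSM P) (a : ℝ) :
    Wgt P X a = 0 :=
  if_neg hX

lemma Wgt_nonneg (P : Finset (WFormula At)) (X : Finset At) (a : ℝ) : 0 ≤ Wgt P X a := by
  unfold Wgt; split_ifs <;> positivity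

section ratio

variable [Fintype At] (P : Finset (WFormula At))

lemma ratio_nonneg (X : Finset At) (a : ℝ) : 0 ≤ ratio P X a :=
  div_nonneg (Wgt_nonneg P X a) (sum_nonneg fun Y _ => Wgt_nonneg P Y a)

lemma ratio_le_one (X : Finset At) (a : ℝ) : ratio P X a ≤ 1 := by
  by_cases hX : X ∈ SSM P
  · exact div_le_one_of_le₀
      (single_le_sum (fun Y _ => Wgt_nonneg P Y a) (by simpa using hX))
      (sum_nonneg fun Y _ => Wgt_nonneg P Y a)
  · simp [ratio, Wgt_of_notMem_SSM hX]

lemma sum_ratio_eq_one {P : Finset (WFormula At)} (h : (SSM P).Nonempty) (a : ℝ) :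
    ∑ X ∈ univ.filter (fun X => X ∈ SSM P), ratio P X a = 1 := by
  obtain ⟨X, hX⟩ := h
  have hpos : 0 < ∑ Y ∈ univ.filter (fun Y => Y ∈ SSM P), Wgt P Y a :=
    sum_pos' (fun Y _ => Wgt_nonneg P Y a)
      ⟨X, by simpa using hX, by rw [Wgt_of_mem_SSM hX]; positivity⟩
  simp only [ratio, ← sum_div, div_self hpos.ne']

lemma exists_tendsto_ratio (X : Finset At) :
    ∃ l, Tendsto (ratio P X) atTop (nhds l) := by
  by_cases hX : X ∈ SSM P
  · obtain ⟨l, hl⟩ := exists_tendsto_exp_div_sum_exp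
      (S := univ.filter (fun Y => Y ∈ SSM P)) (by simpa using hX)
      (fun Y => (#((satPart P Y).filter WFormula.isHard) : ℝ))
      (fun Y => ∑ p ∈ satPart P Y, p.weight.val 0)
    refine ⟨l, hl.congr fun a => ?_⟩
    rw [ratio, Wgt_of_mem_SSM hX]
    refine congrArg _ (sum_congr rfl fun Y hY => (Wgt_of_mem_SSM ?_ a).symm)
    simpa using hY
  · exact ⟨0, tendsto_const_nhds.congr fun a => by simp [ratio, Wgt_of_notMem_SSM hX]⟩

end ratio

/-- if `SSM(Π) ≠ ∅`, then for every interpretation `X` the limit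
    defining `P_Π(X)` exists, lies in `[0, 1]`, and the probabilities of the soft
    stable models sum to `1`. -/
theorem lpmln_prob_is_probability {At : Type} [Fintype At] (P : Finset (WFormula At))
    (h : (SSM P).Nonempty) :
    ∃ Pr : Finset At → ℝ,
      (∀ X : Finset At, Tendsto (fun a : ℝ => ratio P X a) atTop (nhds (Pr X))) ∧
      (∀ X : Finset At, 0 ≤ Pr X ∧ Pr X ≤ 1) ∧
      ∑ X ∈ Finset.univ.filter (fun X => X ∈ SSM P), Pr X = 1 := by
  have hlim (X : Finset At) : Tendsto (ratio P X) atTop (nhds (limUnder atTop (ratio P X))) :=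
    tendsto_nhds_limUnder (exists_tendsto_ratio P X)
  refine ⟨fun X => limUnder atTop (ratio P X), hlim, fun X => ?_, ?_⟩
  · exact ⟨ge_of_tendsto' (hlim X) (ratio_nonneg P X), le_of_tendsto' (hlim X) (ratio_le_one P X)⟩
  · refine tendsto_nhds_unique (tendsto_finsetSum _ fun X _ => hlim X) ?_
    simpa only [sum_ratio_eq_one h] using tendsto_const_nhds
end

section
/- Let Π be an LP^MLN program over a finite set of atoms with SSM(Π) ≠ ∅. For every interpretation X, P_Π(X) ≠ 0 (X is a probabilistic stable model of Π) if and only if X ∈ SSM(Π) and the number of hard formulas of Π satisfied by X is maximal among the soft stable models, i.e., |hard(Π)_X| ≥ |hard(Π)_Y| for every Y ∈ SSM(Π). -/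
/-! The weight of a soft stable model `Y` is `exp (n Y * a + c Y)`, where `n Y` counts the hard
formulas it satisfies and `c Y` sums the weights of the soft ones. After dividing numerator and
denominator of `ratio` by `exp (N * a)`, with `N` the largest `n Y`, every term with `n Y < N`
decays to `0` and the others are constant, so `P_Π` is the softmax of `c` over the soft stable
models of maximal `n`. -/

open Filter

attribute [local instance] Classical.propDecidable

variable {At : Type}

open Real

section LeadingTerms

variable {ι : Type*}

theorem tendsto_exp_mul_add_atTop {k : ℝ} (hk : k ≤ 0) (c : ℝ) :
    Tendsto (fun a : ℝ => exp (k * a + c)) atTop (nhds (if k = 0 then exp c else 0)) := by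
  rcases hk.lt_or_eq with hk | rfl
  · rw [if_neg hk.ne]
    exact tendsto_exp_atBot.comp
      (tendsto_atBot_add_const_right _ c (tendsto_id.const_mul_atTop_of_neg hk))
  · simp

/-- The limit of `exp (n j * a + c j) * exp (-N * a)` as `a → ∞`, for `N` the maximum of `n`
on `S`. -/
noncomputable def leadingExp (S : Finset ι) (n : ι → ℕ) (c : ι → ℝ) (j : ι) : ℝ :=
  if n j = S.sup n then exp (c j) else 0

theorem leadingExp_nonneg (S : Finset ι) (n : ι → ℕ) (c : ι → ℝ) (j : ι) :
    0 ≤ leadingExp S n c j := by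
  unfold leadingExp
  split_ifs <;> positivity

theorem sum_leadingExp_pos {S : Finset ι} (hS : S.Nonempty) (n : ι → ℕ) (c : ι → ℝ) :
    0 < ∑ j ∈ S, leadingExp S n c j := by
  obtain ⟨j, hj, hsup⟩ := S.exists_mem_eq_sup hS n
  refine Finset.sum_pos' (fun j _ => leadingExp_nonneg S n c j) ⟨j, hj, ?_⟩
  simp [leadingExp, hsup, exp_pos]

theorem leadingExp_div_sum_ne_zero_iff {S : Finset ι} {n : ι → ℕ} {c : ι → ℝ} {i : ι}
    (hi : i ∈ S) :
    leadingExp S n c i / ∑ j ∈ S, leadingExp S n c j ≠ 0 ↔ ∀ j ∈ S, n j ≤ n i := by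
  rw [div_ne_zero_iff, and_iff_left (sum_leadingExp_pos ⟨i, hi⟩ n c).ne', leadingExp,
    ne_eq, ite_eq_right_iff, Classical.not_imp, and_iff_left (exp_ne_zero _), ← Finset.sup_le_iff]
  exact ⟨fun h => h.ge, fun h => le_antisymm (Finset.le_sup hi) h⟩

theorem tendsto_exp_div_sum_exp (S : Finset ι) (n : ι → ℕ) (c : ι → ℝ) {i : ι} (hi : i ∈ S) :
    Tendsto (fun a : ℝ => exp (n i * a + c i) / ∑ j ∈ S, exp (n j * a + c j)) atTop
      (nhds (leadingExp S n c i / ∑ j ∈ S, leadingExp S n c j)) := by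
  set N := S.sup n
  have hterm : ∀ j ∈ S, Tendsto (fun a : ℝ => exp ((n j - N : ℝ) * a + c j)) atTop
      (nhds (leadingExp S n c j)) := fun j hj => by
    have hle : (n j : ℝ) - N ≤ 0 := sub_nonpos.2 (by exact_mod_cast Finset.le_sup hj)
    simpa [leadingExp, sub_eq_zero, N] using tendsto_exp_mul_add_atTop hle (c j)
  have hfactor : ∀ (j : ι) (a : ℝ),
      exp (n j * a + c j) = exp (N * a) * exp ((n j - N : ℝ) * a + c j) := fun j a => by
    rw [← exp_add]
    ring_nf
  refine ((hterm i hi).div (tendsto_finsetSum S hterm)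
    (sum_leadingExp_pos ⟨i, hi⟩ n c).ne').congr fun a => ?_
  simp only [hfactor _ a, ← Finset.mul_sum]
  exact (mul_div_mul_left _ _ (exp_ne_zero _)).symm

end LeadingTerms

theorem Weight.val_eq_of_ne_alpha {w : Weight} (hw : w ≠ Weight.alpha) (a b : ℝ) :
    w.val a = w.val b := by
  cases w
  · exact absurd rfl hw
  · rfl

noncomputable def hardCount (P : Finset (WFormula At)) (X : Finset At) : ℕ :=
  ((hardPart P).filter (fun q => q.formula.sat X)).card

noncomputable def softWeight (P : Finset (WFormula At)) (X : Finset At) : ℝ :=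
  ∑ p ∈ (satPart P X).filter (fun p => ¬ p.isHard), p.weight.val 0

theorem sum_satPart_weight_val (P : Finset (WFormula At)) (X : Finset At) (a : ℝ) :
    ∑ p ∈ satPart P X, p.weight.val a = hardCount P X * a + softWeight P X := by
  rw [← Finset.sum_filter_add_sum_filter_not (satPart P X) WFormula.isHard]
  congr 1
  · have hhard : (satPart P X).filter WFormula.isHard
        = (hardPart P).filter (fun q => q.formula.sat X) := by
      ext p
      simp [satPart, hardPart, and_comm, and_assoc]
    rw [Finset.sum_congr rfl fun p hp => by rw [(Finset.mem_filter.1 hp).2, Weight.val],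
      Finset.sum_const, hhard, nsmul_eq_mul, hardCount]
  · exact Finset.sum_congr rfl fun p hp =>
      Weight.val_eq_of_ne_alpha (Finset.mem_filter.1 hp).2 a 0

theorem Wgt_of_mem {P : Finset (WFormula At)} {X : Finset At} (hX : X ∈ SSM P) (a : ℝ) :
    Wgt P X a = exp (hardCount P X * a + softWeight P X) := by
  rw [Wgt, if_pos hX, sum_satPart_weight_val]

theorem ratio_of_not_mem [Fintype At] {P : Finset (WFormula At)} {X : Finset At}
    (hX : X ∉ SSM P) : ratio P X = 0 := by
  funext a
  simp [ratio, Wgt, hX]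

theorem probabilistic_stable_model_iff_general {At : Type} [Fintype At] (P : Finset (WFormula At))
    (X : Finset At) :
    ∃ p : ℝ, Tendsto (fun a : ℝ => ratio P X a) atTop (nhds p) ∧
      (p ≠ 0 ↔ X ∈ SSM P ∧ ∀ Y ∈ SSM P,
        ((hardPart P).filter (fun q => q.formula.sat Y)).card ≤
          ((hardPart P).filter (fun q => q.formula.sat X)).card) := by
  by_cases hX : X ∈ SSM P
  · set S := Finset.univ.filter (fun Y => Y ∈ SSM P)
    have hXS : X ∈ S := Finset.mem_filter.2 ⟨Finset.mem_univ X, hX⟩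
    refine ⟨_, (tendsto_exp_div_sum_exp S (hardCount P) (softWeight P) hXS).congr fun a => ?_,
      ?_⟩
    · rw [ratio, Wgt_of_mem hX]
      exact congrArg _ (Finset.sum_congr rfl fun Y hY =>
        (Wgt_of_mem (Finset.mem_filter.1 hY).2 a).symm)
    · rw [leadingExp_div_sum_ne_zero_iff hXS]
      simp [S, hX, hardCount]
  · exact ⟨0, by rw [ratio_of_not_mem hX]; exact tendsto_const_nhds, by simp [hX]⟩

/-- if `SSM(Π) ≠ ∅`, then for every interpretation `X` the limit
    `P_Π(X)` exists, and `P_Π(X) ≠ 0` iff `X ∈ SSM(Π)` and `X` satisfies a maximal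
    number of hard formulas of `Π` among the soft stable models. -/
theorem probabilistic_stable_model_iff {At : Type} [Fintype At] (P : Finset (WFormula At))
    (h : (SSM P).Nonempty) (X : Finset At) :
    ∃ p : ℝ, Tendsto (fun a : ℝ => ratio P X a) atTop (nhds p) ∧
      (p ≠ 0 ↔ X ∈ SSM P ∧ ∀ Y ∈ SSM P,
        ((hardPart P).filter (fun q => q.formula.sat Y)).card ≤
          ((hardPart P).filter (fun q => q.formula.sat X)).card) :=
  probabilistic_stable_model_iff_general P X
end
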